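/- Let H be a real inner product space, let L : H → ℝ be differentiable at x with gradient ∇L(x) (i.e. Fréchet derivative represented by ∇L(x) via the inner product). Define for ε > 0 the adversarial vulnerability v(ε) = sup over δ with ‖δ‖ ≤ ε of (L(x + δ) − L(x)). Then (v(ε) − ε‖∇L(x)‖)/ε tends to 0 as ε → 0⁺. -/
import Mathlib


open RealInnerProductSpace

/-- Rigorous form of Lemma 2 for `p = q = 2`: if the loss `L` is differentiable
at `x` with gradient `g` (i.e. its Fréchet derivative is `δ ↦ ⟪g, δ⟫`), then the
adversarial vulnerability `v ε = sup_{‖δ‖ ≤ ε} (L (x + δ) - L x)` satisfies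
`(v ε - ε * ‖g‖) / ε → 0` as `ε → 0⁺`. -/
theorem adversarial_vulnerability_first_order {H : Type*} [NormedAddCommGroup H]
    [InnerProductSpace ℝ H] (L : H → ℝ) (x g : H)
    (hL : HasFDerivAt L ((innerSL ℝ) g) x) :
    Filter.Tendsto
      (fun ε : ℝ =>
        (sSup {y : ℝ | ∃ δ : H, ‖δ‖ ≤ ε ∧ y = L (x + δ) - L x} - ε * ‖g‖) / ε)
      (nhdsWithin 0 (Set.Ioi 0)) (nhds 0) := by
  have key : ∀ η : ℝ, 0 < η → ∃ r : ℝ, 0 < r ∧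
      ∀ δ : H, ‖δ‖ ≤ r → |L (x + δ) - L x - ⟪g, δ⟫| ≤ η * ‖δ‖ := by
    intro η hη
    have h := hL.isLittleO.def hη
    rw [Metric.eventually_nhds_iff] at h
    obtain ⟨r, hr, h⟩ := h
    refine ⟨r / 2, by linarith, fun δ hδ => ?_⟩
    have : dist (x + δ) x < r := by
      rw [dist_eq_norm, add_sub_cancel_left]; linarith
    have h2 := h this
    simpa [add_sub_cancel_left] using h2
  rw [Metric.tendsto_nhdsWithin_nhds]
  intro η hη
  obtain ⟨r, hr, hb⟩ := key (η / 2) (by linarith)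
  refine ⟨r, hr, fun ε hε hd => ?_⟩
  simp only [Set.mem_Ioi] at hε
  rw [Real.dist_eq, sub_zero] at hd
  have hεr : ε ≤ r := le_of_lt (by rwa [abs_of_pos hε] at hd)
  set S := {y : ℝ | ∃ δ : H, ‖δ‖ ≤ ε ∧ y = L (x + δ) - L x} with hS
  have hne : S.Nonempty := ⟨L (x + 0) - L x, 0, by simp [hε.le], rfl⟩
  have hub : ∀ y ∈ S, y ≤ ε * ‖g‖ + η / 2 * ε := by
    rintro y ⟨δ, hδ, rfl⟩
    have h1 := hb δ (hδ.trans hεr)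
    have h2 : ⟪g, δ⟫ ≤ ‖g‖ * ‖δ‖ := real_inner_le_norm g δ
    have h3 : |L (x + δ) - L x - ⟪g, δ⟫| ≤ η / 2 * ε := by
      refine h1.trans ?_
      have := hδ
      nlinarith
    have h4 := abs_le.mp h3
    nlinarith [norm_nonneg δ, mul_le_mul_of_nonneg_left hδ (norm_nonneg g)]
  have hupper : sSup S ≤ ε * ‖g‖ + η / 2 * ε := Real.sSup_le hub (by nlinarith [norm_nonneg g])
  set δ₀ : H := (ε / ‖g‖) • g with hδ₀
  have hδ₀norm : ‖δ₀‖ ≤ ε := by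
    rcases eq_or_ne g 0 with h | h
    · simp [hδ₀, h, hε.le]
    · rw [hδ₀, norm_smul, Real.norm_eq_abs, abs_of_nonneg (by positivity : (0:ℝ) ≤ ε / ‖g‖),
        div_mul_cancel₀ _ (norm_ne_zero_iff.mpr h)]
  have hinner : ⟪g, δ₀⟫ = ε * ‖g‖ := by
    rcases eq_or_ne g 0 with h | h
    · simp [hδ₀, h]
    · rw [hδ₀, real_inner_smul_right, real_inner_self_eq_norm_sq]
      have : ‖g‖ ≠ 0 := norm_ne_zero_iff.mpr h
      field_simp
  have hmem : L (x + δ₀) - L x ∈ S := ⟨δ₀, hδ₀norm, rfl⟩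
  have hBdd : BddAbove S := ⟨ε * ‖g‖ + η / 2 * ε, hub⟩
  have hlow : ε * ‖g‖ - η / 2 * ε ≤ sSup S := by
    refine le_trans ?_ (le_csSup hBdd hmem)
    have h1 := hb δ₀ (hδ₀norm.trans hεr)
    have h4 := abs_le.mp h1
    have h5 : η / 2 * ‖δ₀‖ ≤ η / 2 * ε := by nlinarith
    rw [hinner] at h4
    linarith [h4.1]
  rw [Real.dist_eq, sub_zero]
  have hεne : ε ≠ 0 := ne_of_gt hε
  rw [abs_div, abs_of_pos hε, div_lt_iff₀ hε]
  have : |sSup S - ε * ‖g‖| ≤ η / 2 * ε := by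
    rw [abs_le]; constructor <;> linarith
  nlinarith
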